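/- arXiv:2506.10939 — 13 statements merged into one kernel-verified Lean document; each statement's English description precedes it below -/
import Mathlib

section
/- A finite convergence space is connected if and only if its underlying directed graph (with an edge x → y whenever y is a limit of the principal ultrafilter at x) is weakly connected, i.e., there is a path between any two points in the underlying undirected graph. -/
open Filter Set

/-- A convergence structure on `X`: a relation between points and (proper) filters,
such that every principal ultrafilter converges to its point, and finer filters
have more limit points. -/
structure Convergence (X : Type*) where
  /-- The set of limit points of a filter. -/
  conv : Filter X → Set X
  pure_conv : ∀ x : X, x ∈ conv (pure x)
  mono : ∀ ⦃F G : Filter X⦄, F ≤ G → F.NeBot → conv G ⊆ conv F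

namespace Convergence

variable {X Y : Type*}

/-- A set is open if every (proper) filter converging to a point of it contains it. -/
def IsOpen (ξ : Convergence X) (U : Set X) : Prop :=
  ∀ F : Filter X, F.NeBot → (ξ.conv F ∩ U).Nonempty → U ∈ F

/-- A set is closed if it contains all limits of (proper) filters containing it. -/
def IsClosed (ξ : Convergence X) (C : Set X) : Prop :=
  ∀ F : Filter X, F.NeBot → C ∈ F → ξ.conv F ⊆ C

/-- A convergence space is connected if its only clopen subsets are trivial. -/
def ConnSpace (ξ : Convergence X) : Prop :=
  ∀ U : Set X, ξ.IsOpen U → ξ.IsClosed U → U = ∅ ∨ U = Set.univ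

/-- The induced (subspace) convergence on a subset. -/
def subConv (ξ : Convergence X) (A : Set X) : Convergence A where
  conv F := {a | (a : X) ∈ ξ.conv (F.map Subtype.val)}
  pure_conv a := by simpa using ξ.pure_conv (a : X)
  mono F G h hF a ha := by
    haveI := hF
    exact ξ.mono (Filter.map_mono h) Filter.map_neBot ha

/-- A subset of a convergence space is connected if it is connected as a subspace. -/
def ConnSet (ξ : Convergence X) (A : Set X) : Prop :=
  (ξ.subConv A).ConnSpace

/-- The (principal) adherence of a set: all limits of proper filters containing it. -/
def adh (ξ : Convergence X) (A : Set X) : Set X :=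
  {x | ∃ G : Filter X, G.NeBot ∧ A ∈ G ∧ x ∈ ξ.conv G}

/-- The order on convergences: `σ ≤ τ` (σ is coarser than τ) iff every limit for τ
is a limit for σ. -/
def le (σ τ : Convergence X) : Prop :=
  ∀ F : Filter X, F.NeBot → τ.conv F ⊆ σ.conv F

/-- The reciprocal modification: same convergence except on principal ultrafilters,
where `t ∈ lim_{rξ} {x}↑` iff `t ∈ lim_ξ {x}↑` or `x ∈ lim_ξ {t}↑`. -/
def rMod (ξ : Convergence X) : Convergence X where
  conv F := {t | t ∈ ξ.conv F ∨ ∃ x : X, F = pure x ∧ x ∈ ξ.conv (pure t)}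
  pure_conv x := Or.inl (ξ.pure_conv x)
  mono := by
    rintro F G h hF t (ht | ⟨x, rfl, hx⟩)
    · exact Or.inl (ξ.mono h hF ht)
    · have hFx : F = pure x := by
        refine le_antisymm h fun s hs => ?_
        have h1 : {x} ∈ F := le_pure_iff.mp h
        obtain ⟨y, hy⟩ := hF.nonempty_of_mem (inter_mem hs h1)
        have : y = x := hy.2
        subst this
        exact mem_pure.mpr hy.1
      exact Or.inr ⟨x, hFx, hx⟩

/-- The topological modification: the topology whose open sets are the ξ-open sets. -/
def topMod (ξ : Convergence X) : TopologicalSpace X where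
  IsOpen := ξ.IsOpen
  isOpen_univ := fun _ _ _ => univ_mem
  isOpen_inter := fun U V hU hV F hF ⟨x, hx⟩ =>
    inter_mem (hU F hF ⟨x, hx.1, hx.2.1⟩) (hV F hF ⟨x, hx.1, hx.2.2⟩)
  isOpen_sUnion := fun S hS F hF ⟨x, hx⟩ => by
    obtain ⟨U, hUS, hxU⟩ := hx.2
    exact mem_of_superset (hS U hUS F hF ⟨x, hx.1, hxU⟩) (subset_sUnion_of_mem hUS)

/-- The pretopological modification `S₀ξ`. -/
def preMod (ξ : Convergence X) : Convergence X where
  conv F := ⋂ A ∈ {H : Set X | ∀ S ∈ F, (H ∩ S).Nonempty}, ξ.adh A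
  pure_conv x := by
    simp only [Set.mem_iInter]
    intro A hA
    obtain ⟨y, hy⟩ := hA {x} (by simp)
    have : x ∈ A := by
      have : y = x := hy.2
      subst this; exact hy.1
    exact ⟨pure x, by infer_instance, mem_pure.mpr this, ξ.pure_conv x⟩
  mono := by
    intro F G h _ t ht
    simp only [Set.mem_iInter] at ht ⊢
    intro A hA
    exact ht A fun S hS => hA S (h hS)

/-- The convergence associated with a topology. -/
def ofTop (t : TopologicalSpace X) : Convergence X where
  conv F := {x | F ≤ @nhds X t x}
  pure_conv x := @pure_le_nhds X t x
  mono _ _ h _ _ hx := le_trans h hx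

/-- `A` is a `T`-subspace when the topological modification of the subspace convergence
is the subspace topology of the topological modification. -/
def TSubspace (ξ : Convergence X) (A : Set X) : Prop :=
  (ξ.subConv A).topMod = TopologicalSpace.induced (Subtype.val : A → X) ξ.topMod

/-- The dual Alexandroff adherence `adh_{ξ*}`. -/
def adhStar (ξ : Convergence X) (A : Set X) : Set X :=
  {t | (ξ.conv (pure t) ∩ A).Nonempty}

/-- Iterated adherence (for an arbitrary adherence-like operator), by transfinite
recursion: `iterAdh f A 0 = A` and `iterAdh f A α = f (⋃_{β<α} iterAdh f A β)`. -/
noncomputable def iterAdh (f : Set X → Set X) (A : Set X) : Ordinal → Set X :=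
  Ordinal.lt_wf.fix fun α ih =>
    if α = 0 then A else f (⋃ β : {β : Ordinal // β < α}, ih β.1 β.2)

/-- Continuity of maps between convergence spaces. -/
def Continuous (ξ : Convergence X) (τ : Convergence Y) (f : X → Y) : Prop :=
  ∀ F : Filter X, F.NeBot → ∀ x ∈ ξ.conv F, f x ∈ τ.conv (F.map f)

end Convergence

open Convergence in
/-- A finite convergence space is connected iff its underlying digraph
(`x → y` iff `y ∈ lim {x}↑`) is weakly connected. -/
theorem finite_connected_iff_weakly_connected {X : Type*} [Finite X] (ξ : Convergence X) :
    ξ.ConnSpace ↔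
      ∀ a b : X, Relation.ReflTransGen
        (fun x y => y ∈ ξ.conv (pure x) ∨ x ∈ ξ.conv (pure y)) a b := by
  have key : ∀ F : Filter X, F.NeBot → ∃ S : Set X, S ∈ F ∧ S.Nonempty ∧
      ∀ x ∈ S, pure x ≤ F := by
    intro F hF
    have hfin : (F.sets : Set (Set X)).Finite := Set.toFinite _
    have hS : ⋂₀ F.sets ∈ F := (Filter.sInter_mem hfin).mpr fun s hs => hs
    exact ⟨⋂₀ F.sets, hS, hF.nonempty_of_mem hS, fun x hx s hs => hx s hs⟩
  constructor
  · intro hconn a b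
    set R : X → X → Prop := fun x y => y ∈ ξ.conv (pure x) ∨ x ∈ ξ.conv (pure y) with hR
    set U : Set X := {b | Relation.ReflTransGen R a b} with hU
    have hopen : ξ.IsOpen U := by
      rintro F hF ⟨y, hyc, hyU⟩
      obtain ⟨S, hSF, -, hpure⟩ := key F hF
      refine mem_of_superset hSF fun x hx => ?_
      have hy : y ∈ ξ.conv (pure x) := ξ.mono (hpure x hx) pure_neBot hyc
      exact hyU.tail (Or.inr hy)
    have hclosed : ξ.IsClosed U := by
      intro F hF hUF y hy
      obtain ⟨S, hSF, ⟨x, hx⟩, hpure⟩ := key F hF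
      have hxU : x ∈ U := hpure x hx hUF
      have : y ∈ ξ.conv (pure x) := ξ.mono (hpure x hx) pure_neBot hy
      exact hxU.tail (Or.inl this)
    rcases hconn U hopen hclosed with h | h
    · have ha : a ∈ U := Relation.ReflTransGen.refl
      rw [h] at ha
      exact ha.elim
    · show b ∈ U
      rw [h]
      trivial
  · intro hwc U hopen hclosed
    rcases Set.eq_empty_or_nonempty U with h | ⟨a, ha⟩
    · exact Or.inl h
    · right
      ext b
      simp only [Set.mem_univ, iff_true]
      have step : ∀ x y, (y ∈ ξ.conv (pure x) ∨ x ∈ ξ.conv (pure y)) → x ∈ U → y ∈ U := by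
        rintro x y (h | h) hxU
        · exact hclosed (pure x) (by infer_instance) (mem_pure.mpr hxU) h
        · exact hopen (pure y) (by infer_instance) ⟨x, h, hxU⟩
      induction hwc a b with
      | refl => exact ha
      | tail _ hxy ih => exact step _ _ hxy ih
end

section
/- If A is a connected subspace of a convergence space (X, ξ), then the iterated adherence adh_ξ^α A is connected for every ordinal α. -/
open Filter Set

namespace Convergence

variable {X : Type*}

lemma isClosed_compl_of_isOpen (ξ : Convergence X) {U : Set X} (h : ξ.IsOpen U) :
    ξ.IsClosed Uᶜ := by
  intro F hF hUc x hx
  by_contra hxU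
  rw [Set.notMem_compl_iff] at hxU
  have hUF : U ∈ F := h F hF ⟨x, hx, hxU⟩
  obtain ⟨y, hy⟩ := hF.nonempty_of_mem (inter_mem hUF hUc)
  exact hy.2 hy.1

lemma isOpen_compl_of_isClosed (ξ : Convergence X) {C : Set X} (h : ξ.IsClosed C) :
    ξ.IsOpen Cᶜ := by
  rintro F hF ⟨x, hx, hxC⟩
  by_cases hb : (F ⊓ 𝓟 C).NeBot
  · exact absurd (h (F ⊓ 𝓟 C) hb (mem_inf_of_right (mem_principal_self C))
      (ξ.mono inf_le_left hb hx)) hxC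
  · rw [not_neBot, inf_principal_eq_bot] at hb
    exact hb

lemma subConv_conv_inclusion {ξ : Convergence X} {B C : Set X} (h : B ⊆ C)
    {F : Filter B} {b : B} (hb : b ∈ (ξ.subConv B).conv F) :
    Set.inclusion h b ∈ (ξ.subConv C).conv (F.map (Set.inclusion h)) := by
  simp only [subConv, Set.mem_setOf_eq, Filter.map_map] at hb ⊢
  have : (Subtype.val : C → X) ∘ Set.inclusion h = (Subtype.val : B → X) := by
    funext y; rfl
  rw [this]
  exact hb

lemma isOpen_pullback {ξ : Convergence X} {B C : Set X} (h : B ⊆ C) {U : Set C}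
    (hU : (ξ.subConv C).IsOpen U) : (ξ.subConv B).IsOpen (Set.inclusion h ⁻¹' U) := by
  rintro F hF ⟨b, hb, hbU⟩
  haveI := hF
  exact hU (F.map (Set.inclusion h)) Filter.map_neBot
    ⟨_, subConv_conv_inclusion h hb, hbU⟩

lemma isClosed_pullback {ξ : Convergence X} {B C : Set X} (h : B ⊆ C) {U : Set C}
    (hU : (ξ.subConv C).IsClosed U) : (ξ.subConv B).IsClosed (Set.inclusion h ⁻¹' U) := by
  intro F hF hUF b hb
  haveI := hF
  exact hU (F.map (Set.inclusion h)) Filter.map_neBot hUF (subConv_conv_inclusion h hb)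

/-- If `B ⊆ C ⊆ adh B` and a clopen set `U` of the subspace `C` contains (the image of)
all of `B`, then `U` is everything. -/
lemma clopen_univ_of_sub {ξ : Convergence X} {B C : Set X} (hBC : B ⊆ C)
    (hCadh : C ⊆ ξ.adh B) {U : Set C}
    (hUc : (ξ.subConv C).IsClosed U)
    (hBU : ∀ x (hx : x ∈ B), (⟨x, hBC hx⟩ : C) ∈ U) : U = univ := by
  ext c
  simp only [mem_univ, iff_true]
  obtain ⟨G, hG, hBG, hconv⟩ := hCadh c.2
  haveI := hG
  set F : Filter C := G.comap Subtype.val with hFdef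
  haveI hFne : F.NeBot := by
    refine Filter.comap_neBot fun S hS => ?_
    obtain ⟨x, hxS, hxB⟩ := hG.nonempty_of_mem (inter_mem hS hBG)
    exact ⟨⟨x, hBC hxB⟩, hxS⟩
  have hUF : U ∈ F := mem_comap.mpr ⟨B, hBG, fun c' hc' => hBU c'.1 hc'⟩
  have hc : c ∈ (ξ.subConv C).conv F :=
    ξ.mono Filter.map_comap_le Filter.map_neBot hconv
  exact hUc F hFne hUF hc

lemma connSet_of_between {ξ : Convergence X} {B C : Set X} (hB : ξ.ConnSet B)
    (hBC : B ⊆ C) (hCadh : C ⊆ ξ.adh B) : ξ.ConnSet C := by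
  intro U hUo hUc
  rcases hB _ (isOpen_pullback hBC hUo) (isClosed_pullback hBC hUc) with hE | hU
  · left
    have hcompl : Uᶜ = univ := by
      refine clopen_univ_of_sub hBC hCadh (isClosed_compl_of_isOpen _ hUo) fun x hx => ?_
      intro hxU
      have : (⟨x, hx⟩ : B) ∈ Set.inclusion hBC ⁻¹' U := hxU
      rw [hE] at this
      exact this
    rwa [Set.compl_univ_iff] at hcompl
  · right
    refine clopen_univ_of_sub hBC hCadh hUc fun x hx => ?_
    have : (⟨x, hx⟩ : B) ∈ Set.inclusion hBC ⁻¹' U := by rw [hU]; trivial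
    exact this

/-- A union of connected subsets with a common point is connected. -/
lemma connSet_iUnion {ξ : Convergence X} {ι : Sort*} {B : ι → Set X} {a : X}
    (ha : ∀ i, a ∈ B i) (haC : a ∈ ⋃ i, B i)
    (hB : ∀ i, ξ.ConnSet (B i)) : ξ.ConnSet (⋃ i, B i) := by
  intro U hUo hUc
  have hsub : ∀ i, B i ⊆ ⋃ i, B i := fun i => subset_iUnion B i
  by_cases hmem : (⟨a, haC⟩ : (⋃ i, B i : Set X)) ∈ U
  · right
    ext c
    simp only [mem_univ, iff_true]
    obtain ⟨i, hci⟩ := mem_iUnion.mp c.2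
    have hpU : Set.inclusion (hsub i) ⁻¹' U = univ := by
      rcases hB i _ (isOpen_pullback (hsub i) hUo) (isClosed_pullback (hsub i) hUc)
        with hE | hu
      · exfalso
        have : (⟨a, ha i⟩ : B i) ∈ Set.inclusion (hsub i) ⁻¹' U := hmem
        rw [hE] at this
        exact this
      · exact hu
    have : (⟨c.1, hci⟩ : B i) ∈ Set.inclusion (hsub i) ⁻¹' U := by rw [hpU]; trivial
    exact this
  · left
    ext c
    simp only [mem_empty_iff_false, iff_false]
    intro hcU
    obtain ⟨i, hci⟩ := mem_iUnion.mp c.2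
    have hpU : Set.inclusion (hsub i) ⁻¹' Uᶜ = univ := by
      rcases hB i _ (isOpen_pullback (hsub i) (isOpen_compl_of_isClosed _ hUc))
          (isClosed_pullback (hsub i) (isClosed_compl_of_isOpen _ hUo)) with hE | hu
      · exfalso
        have : (⟨a, ha i⟩ : B i) ∈ Set.inclusion (hsub i) ⁻¹' Uᶜ := hmem
        rw [hE] at this
        exact this
      · exact hu
    have : (⟨c.1, hci⟩ : B i) ∈ Set.inclusion (hsub i) ⁻¹' Uᶜ := by rw [hpU]; trivial
    exact this hcU

lemma subset_adh (ξ : Convergence X) (A : Set X) : A ⊆ ξ.adh A :=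
  fun x hx => ⟨pure x, pure_neBot, mem_pure.mpr hx, ξ.pure_conv x⟩

lemma adh_empty (ξ : Convergence X) : ξ.adh (∅ : Set X) = ∅ := by
  ext x
  simp only [adh, mem_setOf_eq, mem_empty_iff_false, iff_false]
  rintro ⟨G, hG, hEG, -⟩
  exact hG.ne (empty_mem_iff_bot.mp hEG)

lemma connSet_empty (ξ : Convergence X) : ξ.ConnSet (∅ : Set X) := by
  intro U _ _
  left
  ext c
  exact absurd c.2 (notMem_empty c.1)

lemma iterAdh_def (f : Set X → Set X) (A : Set X) (α : Ordinal) :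
    iterAdh f A α =
      if α = 0 then A else f (⋃ β : {β : Ordinal // β < α}, iterAdh f A β.1) := by
  unfold iterAdh
  rw [Ordinal.lt_wf.fix_eq]

lemma subset_iterAdh (ξ : Convergence X) (A : Set X) (α : Ordinal) :
    A ⊆ iterAdh ξ.adh A α := by
  induction α using Ordinal.induction with
  | _ α ih =>
  rw [iterAdh_def]
  split_ifs with h0
  · exact subset_rfl
  · have hpos : (0 : Ordinal) < α := pos_iff_ne_zero.mpr h0
    refine subset_trans ?_ (ξ.subset_adh _)
    refine subset_trans (ih 0 hpos) ?_
    exact subset_iUnion (fun β : {β : Ordinal // β < α} => iterAdh ξ.adh A β.1) ⟨0, hpos⟩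

lemma iterAdh_empty (ξ : Convergence X) (α : Ordinal) :
    iterAdh ξ.adh (∅ : Set X) α = ∅ := by
  induction α using Ordinal.induction with
  | _ α ih =>
  rw [iterAdh_def]
  split_ifs with h0
  · rfl
  · have : (⋃ β : {β : Ordinal // β < α}, iterAdh ξ.adh (∅ : Set X) β.1) = ∅ := by
      simp only [iUnion_eq_empty]
      exact fun β => ih β.1 β.2
    rw [this, ξ.adh_empty]

end Convergence

open Convergence in
/-- Every iterated adherence of a connected set is connected. -/
theorem iterAdh_connected {X : Type*} (ξ : Convergence X) {A : Set X}
    (hA : ξ.ConnSet A) : ∀ α : Ordinal, ξ.ConnSet (Convergence.iterAdh ξ.adh A α) := by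
  intro α
  induction α using Ordinal.induction with
  | _ α ih =>
  rw [iterAdh_def]
  split_ifs with h0
  · exact hA
  · rcases eq_empty_or_nonempty A with rfl | ⟨a, haA⟩
    · have : (⋃ β : {β : Ordinal // β < α}, iterAdh ξ.adh (∅ : Set X) β.1) = ∅ := by
        simp only [iUnion_eq_empty]
        exact fun β => ξ.iterAdh_empty β.1
      rw [this, ξ.adh_empty]
      exact ξ.connSet_empty
    · have hpos : (0 : Ordinal) < α := pos_iff_ne_zero.mpr h0
      have ha : ∀ β : {β : Ordinal // β < α}, a ∈ iterAdh ξ.adh A β.1 :=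
        fun β => ξ.subset_iterAdh A β.1 haA
      have haC : a ∈ ⋃ β : {β : Ordinal // β < α}, iterAdh ξ.adh A β.1 :=
        mem_iUnion.mpr ⟨⟨0, hpos⟩, ha ⟨0, hpos⟩⟩
      have hD : ξ.ConnSet (⋃ β : {β : Ordinal // β < α}, iterAdh ξ.adh A β.1) :=
        connSet_iUnion ha haC (fun β => ih β.1 β.2)
      exact connSet_of_between hD (ξ.subset_adh _) subset_rfl
end

section
/- A subset A of a convergence space (X, ξ) is ξ-connected if and only if it is S₀ξ-connected, where S₀ξ is the pretopological modification of ξ. -/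
open Filter Set

namespace ConnAux

open Convergence

variable {X : Type*}

/-- ξ converges implies preMod ξ converges (preMod is coarser). -/
lemma conv_subset_preMod (ξ : Convergence X) (F : Filter X) (hF : F.NeBot) :
    ξ.conv F ⊆ (ξ.preMod).conv F := by
  intro x hx
  simp only [Convergence.preMod, Set.mem_iInter, Set.mem_setOf_eq]
  intro B hB
  have hne : (F ⊓ 𝓟 B).NeBot := by
    rw [Filter.inf_principal_neBot_iff]
    intro S hS
    obtain ⟨y, hy1, hy2⟩ := hB S hS
    exact ⟨y, hy2, hy1⟩
  exact ⟨F ⊓ 𝓟 B, hne, Filter.mem_inf_of_right (Filter.mem_principal_self B),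
    ξ.mono inf_le_left hne hx⟩

lemma subConv_subset (ξ : Convergence X) (A : Set X) (F : Filter A) (hF : F.NeBot) :
    (ξ.subConv A).conv F ⊆ ((ξ.preMod).subConv A).conv F := by
  intro a ha
  exact conv_subset_preMod ξ (F.map Subtype.val) Filter.map_neBot ha

/-- If the image of `H` meets every member of `map val F`, derived from `H` meeting
every member of `F`. -/
lemma push_mesh {A : Set X} (F : Filter A) (H : Set A)
    (h : ∀ S ∈ F, (H ∩ S).Nonempty) :
    ∀ S ∈ F.map (Subtype.val : A → X), ((Subtype.val '' H) ∩ S).Nonempty := by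
  intro S hS
  obtain ⟨b, hbH, hbS⟩ := h _ (Filter.mem_map.mp hS)
  exact ⟨b, ⟨b, hbH, rfl⟩, hbS⟩

/-- Pull back an adherence witness to the subspace. -/
lemma pull_adh (ξ : Convergence X) {A : Set X} (B : Set A) (a : A)
    (h : (a : X) ∈ ξ.adh (Subtype.val '' B)) :
    ∃ G : Filter A, G.NeBot ∧ B ∈ G ∧ a ∈ (ξ.subConv A).conv G := by
  obtain ⟨G, hG, hBG, hconv⟩ := h
  refine ⟨Filter.comap Subtype.val G, ?_, ?_, ?_⟩
  · refine Filter.comap_neBot fun t ht => ?_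
    obtain ⟨y, ⟨b, _, rfl⟩, hyt⟩ := hG.nonempty_of_mem (Filter.inter_mem hBG ht)
    exact ⟨b, hyt⟩
  · have : (Subtype.val : A → X) ⁻¹' (Subtype.val '' B) = B :=
      Set.preimage_image_eq B Subtype.coe_injective
    exact this ▸ Filter.preimage_mem_comap hBG
  · have hne : (Filter.comap (Subtype.val : A → X) G).NeBot := by
      refine Filter.comap_neBot fun t ht => ?_
      obtain ⟨y, ⟨b, _, rfl⟩, hyt⟩ := hG.nonempty_of_mem (Filter.inter_mem hBG ht)
      exact ⟨b, hyt⟩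
    exact ξ.mono Filter.map_comap_le Filter.map_neBot hconv

lemma mem_preMod_adh {A : Set X} (ξ : Convergence X) {F : Filter A} {a : A}
    (ha : a ∈ ((ξ.preMod).subConv A).conv F) (H : Set A)
    (hH : ∀ S ∈ F, (H ∩ S).Nonempty) :
    (a : X) ∈ ξ.adh (Subtype.val '' H) := by
  have := ha
  simp only [Convergence.subConv, Convergence.preMod, Set.mem_setOf_eq,
    Set.mem_iInter] at this
  exact this _ (push_mesh F H hH)

lemma isOpen_iff (ξ : Convergence X) (A : Set X) (U : Set A) :
    (ξ.subConv A).IsOpen U ↔ ((ξ.preMod).subConv A).IsOpen U := by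
  constructor
  · intro hU F hF ⟨a, haF, haU⟩
    by_contra hUF
    have hmesh : ∀ S ∈ F, (Uᶜ ∩ S).Nonempty := by
      intro S hS
      rcases Set.eq_empty_or_nonempty (Uᶜ ∩ S) with he | hne
      · exact absurd (Filter.mem_of_superset hS fun x hx => by
          by_contra hxU
          exact Set.eq_empty_iff_forall_notMem.mp he x ⟨hxU, hx⟩) hUF
      · exact hne
    have hadh := mem_preMod_adh ξ haF Uᶜ hmesh
    obtain ⟨G, hG, hUG, haG⟩ := pull_adh ξ Uᶜ a hadh
    have : U ∈ G := hU G hG ⟨a, haG, haU⟩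
    exact hG.ne (Filter.empty_mem_iff_bot.mp (by
      have := Filter.inter_mem this hUG
      simpa using this))
  · intro hU F hF ⟨a, haF, haU⟩
    exact hU F hF ⟨a, subConv_subset ξ A F hF haF, haU⟩

lemma isClosed_iff (ξ : Convergence X) (A : Set X) (C : Set A) :
    (ξ.subConv A).IsClosed C ↔ ((ξ.preMod).subConv A).IsClosed C := by
  constructor
  · intro hC F hF hCF a ha
    have hmesh : ∀ S ∈ F, (C ∩ S).Nonempty := fun S hS =>
      hF.nonempty_of_mem (Filter.inter_mem hCF hS)
    have hadh := mem_preMod_adh ξ ha C hmesh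
    obtain ⟨G, hG, hCG, haG⟩ := pull_adh ξ C a hadh
    exact hC G hG hCG haG
  · intro hC F hF hCF a ha
    exact hC F hF hCF (subConv_subset ξ A F hF ha)

end ConnAux

open Convergence in
/-- A subset is ξ-connected iff it is connected for the pretopological
modification `S₀ξ`. -/
theorem connSet_iff_preMod_connSet {X : Type*} (ξ : Convergence X) (A : Set X) :
    ξ.ConnSet A ↔ (ξ.preMod).ConnSet A := by
  constructor
  · intro h U hUo hUc
    exact h U ((ConnAux.isOpen_iff ξ A U).mpr hUo) ((ConnAux.isClosed_iff ξ A U).mpr hUc)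
  · intro h U hUo hUc
    exact h U ((ConnAux.isOpen_iff ξ A U).mp hUo) ((ConnAux.isClosed_iff ξ A U).mp hUc)
end

section
/- The reciprocal modification commutes with subspaces: for any convergence space (X, ξ) and A ⊆ X, r(ξ|A) = (rξ)|A. -/
open Filter Set

open Convergence in
/-- The reciprocal modification commutes with subspaces. -/
theorem rMod_subConv {X : Type*} (ξ : Convergence X) (A : Set X) :
    (ξ.subConv A).rMod = (ξ.rMod).subConv A := by
  have key : ∀ (c d : Convergence A), c.conv = d.conv → c = d := by
    rintro ⟨c, _, _⟩ ⟨d, _, _⟩ h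
    simpa using h
  apply key
  funext F
  ext a
  simp only [rMod, subConv, Set.mem_setOf_eq]
  constructor
  · rintro (h | ⟨b, rfl, hb⟩)
    · exact Or.inl h
    · exact Or.inr ⟨(b : X), by simp [Filter.map_pure], hb⟩
  · rintro (h | ⟨x, hx, hxa⟩)
    · exact Or.inl h
    · have hxA : x ∈ A := by
        have h1 : Subtype.val ⁻¹' ({x} : Set X) ∈ F := by
          rw [← Filter.mem_map, hx]; exact rfl
        by_contra hxA
        have : Subtype.val ⁻¹' ({x} : Set X) = (∅ : Set A) := by
          ext b; simp; rintro rfl; exact hxA b.2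
        rw [this] at h1
        have : F = ⊥ := Filter.empty_mem_iff_bot.mp h1
        rw [this] at hx
        simp at hx
        exact absurd hx.symm (Filter.pure_neBot.ne)
      refine Or.inr ⟨⟨x, hxA⟩, ?_, hxa⟩
      apply Filter.map_injective Subtype.val_injective
      rw [hx, Filter.map_pure]
end

section
/- If f : (X, ξ) → (Y, τ) is continuous between convergence spaces, then f is continuous from (X, rξ) to (Y, rτ), where r denotes the reciprocal modification. -/
open Filter Set

open Convergence in
/-- A continuous map remains continuous for the reciprocal modifications. -/
theorem continuous_rMod {X Y : Type*} (ξ : Convergence X) (τ : Convergence Y)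
    (f : X → Y) (hf : Convergence.Continuous ξ τ f) :
    Convergence.Continuous ξ.rMod τ.rMod f := by
  rintro F hF t (ht | ⟨x, rfl, hx⟩)
  · exact Or.inl (hf F hF t ht)
  · refine Or.inr ⟨f x, ?_, ?_⟩
    · simp [Filter.map_pure]
    · have := hf (pure t) (by infer_instance) x hx
      simpa [Filter.map_pure] using this
end

section
/- For every convergence space (X, ξ), the ξ-clopen subsets and the rξ-clopen subsets of X coincide, where rξ is the reciprocal modification of ξ. -/
open Filter Set

open Convergence in
/-- The clopen subsets for ξ and for its reciprocal modification coincide. -/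
theorem clopen_rMod_eq {X : Type*} (ξ : Convergence X) :
    {U : Set X | ξ.IsOpen U ∧ ξ.IsClosed U} =
      {U : Set X | (ξ.rMod).IsOpen U ∧ (ξ.rMod).IsClosed U} := by
  ext U
  simp only [Set.mem_setOf_eq]
  constructor
  · rintro ⟨hO, hC⟩
    constructor
    · rintro F hF ⟨t, ht, htU⟩
      rcases ht with ht | ⟨x, rfl, hx⟩
      · exact hO F hF ⟨t, ht, htU⟩
      · have : ξ.conv (pure t) ⊆ U := hC (pure t) (by infer_instance) (mem_pure.mpr htU)
        exact mem_pure.mpr (this hx)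
    · rintro F hF hUF t ht
      rcases ht with ht | ⟨x, rfl, hx⟩
      · exact hC F hF hUF ht
      · exact mem_pure.mp (hO (pure t) (by infer_instance) ⟨x, hx, mem_pure.mp hUF⟩)
  · rintro ⟨hO, hC⟩
    constructor
    · intro F hF ⟨t, ht, htU⟩
      exact hO F hF ⟨t, Or.inl ht, htU⟩
    · intro F hF hUF t ht
      exact hC F hF hUF (Or.inl ht)
end

section
/- A subset A of a convergence space (X, ξ) is ξ-connected if and only if it is rξ-connected, where rξ is the reciprocal modification of ξ. -/
open Filter Set

open Convergence in
lemma aux_pure_of_map_pure {X : Type*} {A : Set X} {F : Filter A} (hF : F.NeBot)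
    {x : X} (h : F.map Subtype.val = pure x) :
    ∃ b : A, (b : X) = x ∧ F = pure b := by
  have h1 : Subtype.val ⁻¹' ({x} : Set X) ∈ F := by
    rw [← Filter.mem_map, h]; exact rfl
  obtain ⟨b, hb⟩ := hF.nonempty_of_mem h1
  refine ⟨b, hb, ?_⟩
  apply Filter.map_injective Subtype.val_injective
  rw [h, Filter.map_pure, hb]

open Convergence in
lemma aux_clopen_iff {X : Type*} (ξ : Convergence X) (A : Set X) (U : Set A) :
    ((ξ.subConv A).IsOpen U ∧ (ξ.subConv A).IsClosed U) ↔
    (((ξ.rMod).subConv A).IsOpen U ∧ ((ξ.rMod).subConv A).IsClosed U) := by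
  constructor
  · rintro ⟨hO, hC⟩
    constructor
    · intro F hF ⟨a, ha, haU⟩
      rcases ha with h | ⟨x, hx, hxa⟩
      · exact hO F hF ⟨a, h, haU⟩
      · obtain ⟨b, rfl, rfl⟩ := aux_pure_of_map_pure hF hx
        have hb : b ∈ U := by
          have : b ∈ (ξ.subConv A).conv (pure a) := by
            simpa [Convergence.subConv] using hxa
          exact hC (pure a) (by infer_instance) haU this
        simpa using hb
    · intro F hF hUF a ha
      rcases ha with h | ⟨x, hx, hxa⟩
      · exact hC F hF hUF h
      · obtain ⟨b, rfl, rfl⟩ := aux_pure_of_map_pure hF hx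
        have hbU : b ∈ U := hUF
        have hb : b ∈ (ξ.subConv A).conv (pure a) := by
          simpa [Convergence.subConv] using hxa
        have : U ∈ (pure a : Filter A) := hO (pure a) (by infer_instance) ⟨b, hb, hbU⟩
        exact this
  · rintro ⟨hO, hC⟩
    constructor
    · intro F hF ⟨a, ha, haU⟩
      exact hO F hF ⟨a, Or.inl ha, haU⟩
    · intro F hF hUF a ha
      exact hC F hF hUF (Or.inl ha)

open Convergence in
/-- A subset is ξ-connected iff it is rξ-connected. -/
theorem connSet_iff_rMod_connSet {X : Type*} (ξ : Convergence X) (A : Set X) :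
    ξ.ConnSet A ↔ (ξ.rMod).ConnSet A := by
  constructor
  · intro h U hUo hUc
    have := (aux_clopen_iff ξ A U).mpr ⟨hUo, hUc⟩
    exact h U this.1 this.2
  · intro h U hUo hUc
    have := (aux_clopen_iff ξ A U).mp ⟨hUo, hUc⟩
    exact h U this.1 this.2
end

section
/- For any convergence space (X, ξ) and A ⊆ X, adh_{rξ} A = adh_ξ A ∪ adh_{ξ*} A, where ξ* is the dual Alexandroff pretopology with adh_{ξ*} A = { t ∈ X : lim_ξ {t}↑ ∩ A ≠ ∅ }. -/
open Filter Set

open Convergence in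
/-- `adh_{rξ} A = adh_ξ A ∪ adh_{ξ*} A`. -/
theorem adh_rMod_eq {X : Type*} (ξ : Convergence X) (A : Set X) :
    (ξ.rMod).adh A = ξ.adh A ∪ ξ.adhStar A := by
  ext t
  constructor
  · rintro ⟨G, hG, hA, (ht | ⟨x, rfl, hx⟩)⟩
    · exact Or.inl ⟨G, hG, hA, ht⟩
    · exact Or.inr ⟨x, hx, hA⟩
  · rintro (⟨G, hG, hA, ht⟩ | ⟨x, hx, hxA⟩)
    · exact ⟨G, hG, hA, Or.inl ht⟩
    · exact ⟨pure x, by infer_instance, mem_pure.mpr hxA, Or.inr ⟨x, rfl, hx⟩⟩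
end

section
/- If A is a nonempty connected subset of a convergence space (X, ξ), then the enclosure e(A) = { x ∈ X : A ∪ {x} is connected } equals adh_ξ A ∪ adh_{ξ*} A, which equals adh_{rξ} A. -/
open Filter Set

section EnclosureAux

open Convergence

variable {X : Type*}

private lemma eq_pure_of_singleton_mem {G : Filter X} {x : X} (hG : G.NeBot)
    (hx : {x} ∈ G) : G = pure x := by
  refine le_antisymm (le_pure_iff.mpr hx) fun s hs => ?_
  obtain ⟨y, hy1, hy2⟩ := hG.nonempty_of_mem (inter_mem hs hx)
  have : y = x := hy2
  subst this
  exact mem_pure.mpr hy1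

private lemma isOpen_compl_of_clopen (ξ : Convergence X) {U : Set X}
    (hUc : ξ.IsClosed U) : ξ.IsOpen Uᶜ := by
  rintro F hF ⟨t, ht, htc⟩
  by_contra h
  have hne : (F ⊓ 𝓟 U).NeBot := ⟨fun hb => h (by simpa using inf_principal_eq_bot.mp hb)⟩
  have hsub : ξ.conv (F ⊓ 𝓟 U) ⊆ U :=
    hUc _ hne (mem_inf_of_right (mem_principal_self U))
  exact htc (hsub (ξ.mono inf_le_left hne ht))

private lemma isClosed_compl_of_clopen (ξ : Convergence X) {U : Set X}
    (hUo : ξ.IsOpen U) : ξ.IsClosed Uᶜ := by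
  intro F hF hUF t ht
  intro htU
  have : U ∈ F := hUo F hF ⟨t, ht, htU⟩
  exact absurd (inter_mem this hUF) (by simp [hF.ne])

/-- the inclusion of `A` into `A ∪ {x}` -/
private def incl (A : Set X) (x : X) : ↥A → ↥(A ∪ {x}) :=
  fun a => ⟨a.1, Or.inl a.2⟩

private lemma map_incl_val (A : Set X) (x : X) (F : Filter ↥A) :
    Filter.map Subtype.val (Filter.map (incl A x) F) = Filter.map Subtype.val F := by
  rw [Filter.map_map]; rfl

/-- A clopen set in `A ∪ {x}` containing no point of `A` is empty,
provided `x ∈ adh A ∪ adhStar A`. -/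
private lemma clopen_no_A_point (ξ : Convergence X) {A : Set X} {x : X}
    (hx : x ∈ ξ.adh A ∪ ξ.adhStar A)
    {U : Set ↥(A ∪ {x})} (hUo : (ξ.subConv (A ∪ {x})).IsOpen U)
    (hUc : (ξ.subConv (A ∪ {x})).IsClosed U)
    (hV : ∀ p : ↥(A ∪ {x}), (p : X) ∈ A → p ∉ U) : U = ∅ := by
  by_contra hne
  obtain ⟨p, hp⟩ := nonempty_iff_ne_empty.mpr hne
  have hpx : (p : X) = x := by
    rcases p.2 with h | h
    · exact absurd hp (hV p h)
    · exact h
  have hxA : x ∉ A := fun hxA => hV p (by rw [hpx]; exact hxA) hp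
  have hxB : x ∈ A ∪ {x} := Or.inr rfl
  set px : ↥(A ∪ {x}) := ⟨x, hxB⟩ with hpxdef
  have hU : U = {px} := by
    ext q
    constructor
    · intro hq
      have hq' : (q : X) = x := by
        rcases q.2 with h | h
        · exact absurd hq (hV q h)
        · exact h
      exact Subtype.ext hq'
    · intro hq
      have : q = px := hq
      rw [this, show px = p from (Subtype.ext hpx).symm]
      exact hp
  rcases hx with hadh | hstar
  · obtain ⟨G, hG, hAG, hxG⟩ := hadh
    set F : Filter ↥(A ∪ {x}) := Filter.comap Subtype.val G with hFdef
    have hFne : F.NeBot := by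
      rw [hFdef, Filter.comap_neBot_iff]
      intro t ht
      obtain ⟨a, ha1, ha2⟩ := hG.nonempty_of_mem (inter_mem ht hAG)
      exact ⟨⟨a, Or.inl ha2⟩, ha1⟩
    have hmapF : Filter.map Subtype.val F = G := by
      rw [hFdef, Filter.map_comap, Subtype.range_coe]
      exact inf_eq_left.mpr (le_principal_iff.mpr (mem_of_superset hAG subset_union_left))
    have hpxconv : px ∈ (ξ.subConv (A ∪ {x})).conv F := by
      show (px : X) ∈ ξ.conv (Filter.map Subtype.val F)
      rw [hmapF]; exact hxG
    have hUF : U ∈ F := hUo F hFne ⟨px, hpxconv, by rw [hU]; rfl⟩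
    rw [hFdef, Filter.mem_comap] at hUF
    obtain ⟨t, htG, hsub⟩ := hUF
    obtain ⟨a, ha1, ha2⟩ := hG.nonempty_of_mem (inter_mem htG hAG)
    have : (⟨a, Or.inl ha2⟩ : ↥(A ∪ {x})) ∈ U := hsub ha1
    rw [hU] at this
    have hax : a = x := congrArg Subtype.val this
    exact hxA (hax ▸ ha2)
  · obtain ⟨a, haconv, haA⟩ := hstar
    have hUF : U ∈ (pure px : Filter ↥(A ∪ {x})) := by
      rw [hU]; exact mem_pure.mpr rfl
    have hsub := hUc (pure px) (by infer_instance) hUF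
    have hpa : (⟨a, Or.inl haA⟩ : ↥(A ∪ {x})) ∈ (ξ.subConv (A ∪ {x})).conv (pure px) := by
      show (a : X) ∈ ξ.conv (Filter.map Subtype.val (pure px))
      rw [Filter.map_pure]; exact haconv
    have := hsub hpa
    rw [hU] at this
    have hax : a = x := congrArg Subtype.val this
    exact hxA (hax ▸ haA)

private lemma conn_union_point (ξ : Convergence X) {A : Set X} {x : X}
    (hconn : ξ.ConnSet A) (hx : x ∈ ξ.adh A ∪ ξ.adhStar A) :
    ξ.ConnSet (A ∪ {x}) := by
  intro U hUo hUc
  have hmap := map_incl_val A x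
  -- the trace of U on A is clopen
  have hVo : ∀ {W : Set ↥(A ∪ {x})}, (ξ.subConv (A ∪ {x})).IsOpen W →
      (ξ.subConv A).IsOpen (incl A x ⁻¹' W) := by
    intro W hWo
    rintro F hF ⟨a, ha1, ha2⟩
    haveI := hF
    have hGne : (Filter.map (incl A x) F).NeBot := Filter.map_neBot
    have hconv : incl A x a ∈ (ξ.subConv (A ∪ {x})).conv (Filter.map (incl A x) F) := by
      show ((incl A x a : ↥(A ∪ {x})) : X) ∈ ξ.conv (Filter.map Subtype.val (Filter.map (incl A x) F))
      rw [hmap]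
      exact ha1
    exact hWo _ hGne ⟨incl A x a, hconv, ha2⟩
  have hVc : ∀ {W : Set ↥(A ∪ {x})}, (ξ.subConv (A ∪ {x})).IsClosed W →
      (ξ.subConv A).IsClosed (incl A x ⁻¹' W) := by
    intro W hWc F hF hVF a ha
    haveI := hF
    have hGne : (Filter.map (incl A x) F).NeBot := Filter.map_neBot
    have hWG : W ∈ Filter.map (incl A x) F := Filter.mem_map.mpr hVF
    have hconv : incl A x a ∈ (ξ.subConv (A ∪ {x})).conv (Filter.map (incl A x) F) := by
      show ((incl A x a : ↥(A ∪ {x})) : X) ∈ ξ.conv (Filter.map Subtype.val (Filter.map (incl A x) F))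
      rw [hmap]
      exact ha
    exact hWc _ hGne hWG hconv
  rcases hconn (incl A x ⁻¹' U) (hVo hUo) (hVc hUc) with hV | hV
  · left
    refine clopen_no_A_point ξ hx hUo hUc fun p hpA hpU => ?_
    have : incl A x ⟨(p : X), hpA⟩ ∈ U := by
      have : incl A x ⟨(p : X), hpA⟩ = p := Subtype.ext rfl
      rw [this]; exact hpU
    rw [show (incl A x ⟨(p : X), hpA⟩ ∈ U) = (⟨(p : X), hpA⟩ ∈ incl A x ⁻¹' U) from rfl, hV] at this
    exact this
  · right
    have hcO : (ξ.subConv (A ∪ {x})).IsOpen Uᶜ := isOpen_compl_of_clopen _ hUc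
    have hcC : (ξ.subConv (A ∪ {x})).IsClosed Uᶜ := isClosed_compl_of_clopen _ hUo
    have hcV : ∀ p : ↥(A ∪ {x}), (p : X) ∈ A → p ∉ Uᶜ := by
      intro p hpA hpU
      have : incl A x ⟨(p : X), hpA⟩ ∉ U := by
        have he : incl A x ⟨(p : X), hpA⟩ = p := Subtype.ext rfl
        rw [he]; exact hpU
      have : (⟨(p : X), hpA⟩ : ↥A) ∉ incl A x ⁻¹' U := this
      rw [hV] at this
      exact this (mem_univ _)
    have := clopen_no_A_point ξ hx hcO hcC hcV
    rwa [compl_empty_iff] at this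

private lemma mem_adh_of_conn (ξ : Convergence X) {A : Set X} {x : X}
    (hA : A.Nonempty) (h : ξ.ConnSet (A ∪ {x})) :
    x ∈ ξ.adh A ∪ ξ.adhStar A := by
  by_cases hxA : x ∈ A
  · exact Or.inl ⟨pure x, by infer_instance, mem_pure.mpr hxA, ξ.pure_conv x⟩
  by_contra hcon
  rw [Set.mem_union] at hcon
  push_neg at hcon
  obtain ⟨hadh, hstar⟩ := hcon
  have hxB : x ∈ A ∪ {x} := Or.inr rfl
  set px : ↥(A ∪ {x}) := ⟨x, hxB⟩ with hpxdef
  have hUo : (ξ.subConv (A ∪ {x})).IsOpen {px} := by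
    rintro F hF ⟨p, hp1, hp2⟩
    have hppx : p = px := hp2
    subst hppx
    by_contra hUF
    have hne : (F ⊓ 𝓟 ({px}ᶜ : Set ↥(A ∪ {x}))).NeBot :=
      ⟨fun hb => hUF (by simpa using inf_principal_eq_bot.mp hb)⟩
    have hAmem : A ∈ Filter.map Subtype.val (F ⊓ 𝓟 ({px}ᶜ : Set ↥(A ∪ {x}))) := by
      rw [Filter.mem_map]
      refine mem_of_superset (mem_inf_of_right (mem_principal_self _)) ?_
      intro q hq
      rcases q.2 with hqa | hqx
      · exact hqa
      · exact absurd (Subtype.ext (show (q:X) = x from hqx)) hq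
    have hxc : x ∈ ξ.conv (Filter.map Subtype.val (F ⊓ 𝓟 ({px}ᶜ : Set ↥(A ∪ {x})))) := by
      haveI := hne
      exact ξ.mono (Filter.map_mono inf_le_left) Filter.map_neBot hp1
    exact hadh ⟨_, Filter.map_neBot, hAmem, hxc⟩
  have hUc : (ξ.subConv (A ∪ {x})).IsClosed {px} := by
    intro F hF hUF p hp
    haveI := hF
    have hxm : ({x} : Set X) ∈ Filter.map Subtype.val F := by
      rw [Filter.mem_map]
      refine mem_of_superset hUF ?_
      intro q hq
      have : q = px := hq
      rw [this]
      rfl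
    have hFpure : Filter.map Subtype.val F = pure x :=
      eq_pure_of_singleton_mem Filter.map_neBot hxm
    have hp' : (p : X) ∈ ξ.conv (pure x) := by
      have : (p : X) ∈ ξ.conv (Filter.map Subtype.val F) := hp
      rwa [hFpure] at this
    rcases p.2 with hpa | hpx
    · exact absurd ⟨(p : X), hp', hpa⟩ hstar
    · exact Subtype.ext hpx
  rcases h {px} hUo hUc with hc | hc
  · exact absurd hc (singleton_ne_empty px)
  · obtain ⟨a, haA⟩ := hA
    have : (⟨a, Or.inl haA⟩ : ↥(A ∪ {x})) ∈ ({px} : Set ↥(A ∪ {x})) := by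
      rw [hc]; exact mem_univ _
    have hax : a = x := congrArg Subtype.val this
    exact hxA (hax ▸ haA)

end EnclosureAux

open Convergence in
/-- The enclosure of a nonempty connected set equals
`adh_ξ A ∪ adh_{ξ*} A = adh_{rξ} A`. -/
theorem enclosure_eq {X : Type*} (ξ : Convergence X) {A : Set X}
    (hA : A.Nonempty) (hconn : ξ.ConnSet A) :
    {x : X | ξ.ConnSet (A ∪ {x})} = ξ.adh A ∪ ξ.adhStar A ∧
      ξ.adh A ∪ ξ.adhStar A = (ξ.rMod).adh A := by
  constructor
  · ext x
    constructor
    · intro hx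
      exact mem_adh_of_conn ξ hA hx
    · intro hx
      exact conn_union_point ξ hconn hx
  · ext t
    constructor
    · rintro (⟨G, hG, hAG, htG⟩ | ⟨a, haconv, haA⟩)
      · exact ⟨G, hG, hAG, Or.inl htG⟩
      · exact ⟨pure a, by infer_instance, mem_pure.mpr haA, Or.inr ⟨a, rfl, haconv⟩⟩
    · rintro ⟨G, hG, hAG, (htG | ⟨a, rfl, haconv⟩)⟩
      · exact Or.inl ⟨G, hG, hAG, htG⟩
      · exact Or.inr ⟨a, haconv, mem_pure.mp hAG⟩
end

section
/- A subset of a convergence space that is either closed or open is a T-subspace, i.e., the topological modification of the subspace convergence equals the subspace topology of the topological modification: T(ξ|A) = (Tξ)|A. -/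
open Filter Set

open Convergence in
/-- A subset that is either closed or open is a `T`-subspace. -/
theorem tSubspace_of_closed_or_open {X : Type*} (ξ : Convergence X) {A : Set X}
    (h : ξ.IsClosed A ∨ ξ.IsOpen A) : ξ.TSubspace A := by
  -- easy direction: preimages of ξ-open sets are (ξ.subConv A)-open
  have easy : ∀ V : Set X, ξ.IsOpen V →
      (ξ.subConv A).IsOpen (Subtype.val ⁻¹' V) := by
    intro V hV F hF ⟨a, ha, haV⟩
    haveI := hF
    exact hV (F.map Subtype.val) Filter.map_neBot ⟨(a : X), ha, haV⟩
  -- key lemma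
  have key : ∀ U : Set A, (ξ.subConv A).IsOpen U → ∀ F : Filter X, F.NeBot → A ∈ F →
      ∀ x ∈ ξ.conv F, x ∈ Subtype.val '' U → ∃ S ∈ F, S ∩ A ⊆ Subtype.val '' U := by
    rintro U hU F hF hAF x hx ⟨a, haU, hax⟩
    set G := Filter.comap (Subtype.val : A → X) F with hGdef
    have hG : G.NeBot := by
      refine Filter.comap_neBot fun s hs => ?_
      obtain ⟨y, hy⟩ := hF.nonempty_of_mem (Filter.inter_mem hs hAF)
      exact ⟨⟨y, hy.2⟩, hy.1⟩
    have hmap : Filter.map Subtype.val G = F :=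
      Filter.map_comap_of_mem (by rw [Subtype.range_coe]; exact hAF)
    have haconv : a ∈ (ξ.subConv A).conv G := by
      show (a : X) ∈ ξ.conv (G.map Subtype.val)
      rw [hmap, hax]; exact hx
    have hUG : U ∈ G := hU G hG ⟨a, haconv, haU⟩
    obtain ⟨S, hS, hSU⟩ := Filter.mem_comap.mp hUG
    refine ⟨S, hS, ?_⟩
    rintro y ⟨hyS, hyA⟩
    exact ⟨⟨y, hyA⟩, hSU hyS, rfl⟩
  refine TopologicalSpace.ext (funext fun U => propext ⟨?_, ?_⟩)
  · intro hU
    rcases h with hcl | hop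
    · -- closed case: V = val '' U ∪ Aᶜ
      refine ⟨Subtype.val '' U ∪ Aᶜ, ?_, ?_⟩
      · intro F hF ⟨x, hx, hxV⟩
        by_cases hA : Aᶜ ∈ F
        · exact Filter.mem_of_superset hA subset_union_right
        · have hGne : (F ⊓ 𝓟 A).NeBot := by
            rw [Filter.neBot_iff]
            intro hbot
            exact hA (Filter.inf_principal_eq_bot.mp hbot)
          have hAG : A ∈ F ⊓ 𝓟 A := Filter.mem_inf_of_right (Filter.mem_principal_self A)
          have hxG : x ∈ ξ.conv (F ⊓ 𝓟 A) := ξ.mono inf_le_left hGne hx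
          have hxA : x ∈ A := hcl (F ⊓ 𝓟 A) hGne hAG hxG
          have hxU : x ∈ Subtype.val '' U := hxV.resolve_right fun hc => hc hxA
          obtain ⟨S, hSG, hS⟩ := key U hU (F ⊓ 𝓟 A) hGne hAG x hxG hxU
          have hT : {y | y ∈ A → y ∈ S} ∈ F := Filter.mem_inf_principal.mp hSG
          refine Filter.mem_of_superset hT fun y hy => ?_
          by_cases hyA : y ∈ A
          · exact Or.inl (hS ⟨hy hyA, hyA⟩)
          · exact Or.inr hyA
      · ext a
        simp [Set.preimage_image_eq U Subtype.val_injective, a.2]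
    · -- open case: V = val '' U
      refine ⟨Subtype.val '' U, ?_, ?_⟩
      · intro F hF ⟨x, hx, hxV⟩
        have hxA : x ∈ A := by
          obtain ⟨a, _, rfl⟩ := hxV; exact a.2
        have hAF : A ∈ F := hop F hF ⟨x, hx, hxA⟩
        obtain ⟨S, hS, hSA⟩ := key U hU F hF hAF x hx hxV
        exact Filter.mem_of_superset (Filter.inter_mem hS hAF) hSA
      · exact Set.preimage_image_eq U Subtype.val_injective
  · intro hU
    obtain ⟨V, hV, rfl⟩ := hU
    exact easy V hV
end

section
/- If (X, ξ) is a convergence space, S ⊆ X, and x ∈ cl_ξ S \ adh_ξ S, then S ∪ {x} is not a T-subspace of (X, ξ). -/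
open Filter Set

open Convergence in
/-- If `x ∈ cl_ξ S \ adh_ξ S` then `S ∪ {x}` is not a `T`-subspace. -/
theorem not_tSubspace {X : Type*} (ξ : Convergence X) {S : Set X} {x : X}
    (h : x ∈ @closure X ξ.topMod S \ ξ.adh S) : ¬ ξ.TSubspace (S ∪ {x}) := by
  intro hT
  obtain ⟨hcl, hadh⟩ := h
  have hxS : x ∉ S := fun hxS => hadh ⟨pure x, inferInstance, mem_pure.mpr hxS, ξ.pure_conv x⟩
  have hxA : x ∈ S ∪ {x} := Or.inr rfl
  letI := ξ.topMod
  -- The singleton {x} is open in the subspace convergence on S ∪ {x}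
  have hopen : (ξ.subConv (S ∪ {x})).IsOpen {(⟨x, hxA⟩ : (S ∪ {x} : Set X))} := by
    rintro F hF ⟨a, ha, haU⟩
    rw [Set.mem_singleton_iff] at haU
    subst haU
    by_contra hmem
    have hP : ∀ s ∈ F.map Subtype.val, (s ∩ S).Nonempty := by
      intro s hs
      have hs' : Subtype.val ⁻¹' s ∈ F := hs
      have hnot : ¬ (Subtype.val ⁻¹' s ⊆ {(⟨x, hxA⟩ : (S ∪ {x} : Set X))}) :=
        fun hsub => hmem (Filter.mem_of_superset hs' hsub)
      rw [Set.not_subset] at hnot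
      obtain ⟨b, hbs, hbx⟩ := hnot
      rcases b.2 with hb | hb
      · exact ⟨b, hbs, hb⟩
      · exact absurd (Subtype.ext (Set.mem_singleton_iff.mp hb)) (by simpa using hbx)
    have hNB : ((F.map Subtype.val) ⊓ 𝓟 S).NeBot := Filter.inf_principal_neBot_iff.mpr hP
    exact hadh ⟨(F.map Subtype.val) ⊓ 𝓟 S, hNB,
      Filter.mem_inf_of_right (Filter.mem_principal_self S),
      ξ.mono inf_le_left hNB ha⟩
  -- This singleton is open in the topological modification of the subspace
  have hopen' : @_root_.IsOpen _ (ξ.subConv (S ∪ {x})).topMod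
      {(⟨x, hxA⟩ : (S ∪ {x} : Set X))} := hopen
  rw [hT, isOpen_induced_iff] at hopen'
  obtain ⟨U, hU, hUx⟩ := hopen'
  have hxU : x ∈ U := by
    have : (⟨x, hxA⟩ : (S ∪ {x} : Set X)) ∈ Subtype.val ⁻¹' U := by
      rw [hUx]; exact rfl
    exact this
  have hUS : U ∩ S = ∅ := by
    ext y
    simp only [Set.mem_inter_iff, Set.mem_empty_iff_false, iff_false, not_and]
    intro hyU hyS
    have h1 : (⟨y, Or.inl hyS⟩ : (S ∪ {x} : Set X)) ∈ Subtype.val ⁻¹' U := hyU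
    rw [hUx, Set.mem_singleton_iff] at h1
    have h2 : y = x := congrArg Subtype.val h1
    exact hxS (h2 ▸ hyS)
  obtain ⟨y, hy⟩ := mem_closure_iff.mp hcl U hU hxU
  rw [hUS] at hy
  exact hy
end

section
/- For a convergence space (X, ξ), the following are equivalent: (1) S₀ξ = Tξ (the pretopological and topological modifications coincide); (2) adh_ξ S = cl_ξ S for every S ⊆ X (topological defect 1); (3) every subset of X is a T-subspace. -/
open Filter Set

namespace Convergence

variable {X Y : Type*}

open Topology in
theorem ext' {ξ η : Convergence X} (h : ξ.conv = η.conv) : ξ = η := by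
  cases ξ; cases η; cases h; rfl

theorem isOpen_topMod (ξ : Convergence X) (U : Set X) :
    @_root_.IsOpen X ξ.topMod U ↔ ξ.IsOpen U := Iff.rfl

/-- The adherence is always contained in the topological closure. -/
theorem adh_subset_closure (ξ : Convergence X) (S : Set X) :
    ξ.adh S ⊆ @closure X ξ.topMod S := by
  letI := ξ.topMod
  rintro x ⟨G, hG, hSG, hxG⟩
  rw [mem_closure_iff]
  intro U hU hxU
  have hUG : U ∈ G := hU G hG ⟨x, hxG, hxU⟩
  obtain ⟨y, hy⟩ := hG.nonempty_of_mem (inter_mem hUG hSG)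
  exact ⟨y, hy⟩

/-- An induced-open subset of `A` is open for the subspace convergence. -/
theorem isOpen_subConv_of_induced (ξ : Convergence X) (A : Set X) (U : Set X)
    (hU : ξ.IsOpen U) : (ξ.subConv A).IsOpen (Subtype.val ⁻¹' U) := by
  intro F hF ⟨a, haconv, haU⟩
  haveI := hF
  have : U ∈ F.map Subtype.val := hU _ Filter.map_neBot ⟨a.val, haconv, haU⟩
  exact this

end Convergence

open Convergence in
/-- The following are equivalent: `S₀ξ = Tξ`; `adh_ξ = cl_ξ` (topological defect 1);
every subset is a `T`-subspace. -/
theorem preMod_eq_topMod_tfae {X : Type*} (ξ : Convergence X) :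
    (ξ.preMod = Convergence.ofTop ξ.topMod ↔
        ∀ S : Set X, ξ.adh S = @closure X ξ.topMod S) ∧
      ((∀ S : Set X, ξ.adh S = @closure X ξ.topMod S) ↔
        ∀ A : Set X, ξ.TSubspace A) := by
  letI := ξ.topMod
  constructor
  · -- (1) ↔ (2)
    constructor
    · intro h S
      refine subset_antisymm (ξ.adh_subset_closure S) fun x hx => ?_
      have hconv : ξ.preMod.conv = (Convergence.ofTop ξ.topMod).conv := by rw [h]
      have hx' : x ∈ ξ.preMod.conv (@nhds X ξ.topMod x) := by
        rw [hconv]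
        show @nhds X ξ.topMod x ≤ @nhds X ξ.topMod x
        exact le_rfl
      simp only [Convergence.preMod, Set.mem_iInter, Set.mem_setOf_eq] at hx'
      apply hx'
      intro T hT
      obtain ⟨U, hUT, hU, hxU⟩ := mem_nhds_iff.mp hT
      obtain ⟨y, hyU, hyS⟩ := mem_closure_iff.mp hx U hU hxU
      exact ⟨y, hyS, hUT hyU⟩
    · intro hadh
      apply Convergence.ext'
      funext F
      ext x
      simp only [Convergence.preMod, Convergence.ofTop, Set.mem_iInter,
        Set.mem_setOf_eq]
      constructor
      · intro hx
        rw [le_nhds_iff]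
        intro U hxU hU
        by_contra hUF
        have hAc : ∀ S ∈ F, (Uᶜ ∩ S).Nonempty := by
          intro S hS
          rcases Set.eq_empty_or_nonempty (Uᶜ ∩ S) with he | hne
          · exact absurd (mem_of_superset hS (by
              intro y hy
              by_contra hyU
              exact Set.eq_empty_iff_forall_notMem.mp he y ⟨hyU, hy⟩)) hUF
          · exact hne
        have := hx Uᶜ hAc
        rw [hadh, (hU.isClosed_compl).closure_eq] at this
        exact this hxU
      · intro hx A hA
        rw [hadh, mem_closure_iff]
        intro U hU hxU
        obtain ⟨y, hyA, hyU⟩ := hA U (hx (hU.mem_nhds hxU))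
        exact ⟨y, hyU, hyA⟩
  · -- (2) ↔ (3)
    constructor
    · intro hadh A
      apply TopologicalSpace.ext
      ext V
      constructor
      · -- subConv-open → induced-open
        intro hV
        rw [isOpen_induced_iff]
        set W : Set X := Subtype.val '' Vᶜ with hW
        refine ⟨(closure W)ᶜ, isClosed_closure.isOpen_compl, ?_⟩
        ext a
        simp only [Set.mem_preimage, Set.mem_compl_iff]
        constructor
        · intro ha
          by_contra haV
          have : (a : X) ∈ W := ⟨a, haV, rfl⟩
          exact ha (subset_closure this)
        · intro haV
          rw [← hadh]
          rintro ⟨G, hG, hWG, hconv⟩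
          have hrange : Set.range (Subtype.val : A → X) ∈ G := by
            refine mem_of_superset hWG ?_
            rintro y ⟨b, _, rfl⟩
            exact ⟨b, rfl⟩
          have hmap : (Filter.comap Subtype.val G).map Subtype.val = G :=
            Filter.map_comap_of_mem hrange
          haveI hFne : (Filter.comap (Subtype.val : A → X) G).NeBot := by
            rw [Filter.comap_neBot_iff]
            intro t ht
            obtain ⟨y, hyt, hyW⟩ := hG.nonempty_of_mem (inter_mem ht hWG)
            obtain ⟨b, _, rfl⟩ := hyW
            exact ⟨b, hyt⟩
          have haconv : a ∈ (ξ.subConv A).conv (Filter.comap Subtype.val G) := by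
            show (a : X) ∈ ξ.conv _
            rw [hmap]; exact hconv
          have hVF : V ∈ Filter.comap (Subtype.val : A → X) G :=
            hV _ hFne ⟨a, haconv, haV⟩
          obtain ⟨t, htG, hts⟩ := hVF
          obtain ⟨y, hyt, hyW⟩ := hG.nonempty_of_mem (inter_mem htG hWG)
          obtain ⟨b, hbV, rfl⟩ := hyW
          exact hbV (hts hyt)
      · -- induced-open → subConv-open
        intro hV
        obtain ⟨U, hU, rfl⟩ := isOpen_induced_iff.mp hV
        exact ξ.isOpen_subConv_of_induced A U hU
    · intro hT S
      refine subset_antisymm (ξ.adh_subset_closure S) fun x hx => ?_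
      by_cases hxS : x ∈ S
      · exact ⟨pure x, inferInstance, mem_pure.mpr hxS, ξ.pure_conv x⟩
      by_contra hxadh
      set A : Set X := insert x S with hA
      have hxA : x ∈ A := Set.mem_insert x S
      set V : Set A := {(⟨x, hxA⟩ : A)} with hV
      have hVopen : (ξ.subConv A).IsOpen V := by
        rintro F hF ⟨a, haconv, haV⟩
        have hax : (a : X) = x := congrArg Subtype.val haV
        by_contra hVF
        haveI hF' : (F ⊓ 𝓟 Vᶜ).NeBot := by
          rw [Filter.inf_principal_neBot_iff]
          intro T hT'
          rcases Set.eq_empty_or_nonempty (T ∩ Vᶜ) with he | hne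
          · refine absurd (mem_of_superset hT' fun b hb => ?_) hVF
            by_contra hbV
            exact Set.eq_empty_iff_forall_notMem.mp he b ⟨hb, hbV⟩
          · exact hne
        refine hxadh ⟨(F ⊓ 𝓟 Vᶜ).map Subtype.val, Filter.map_neBot, ?_, ?_⟩
        · refine Filter.mem_map.mpr (mem_of_superset
            (Filter.mem_inf_of_right (mem_principal_self _)) ?_)
          intro b hb
          have hbx : (b : X) ≠ x := fun h => hb (by
            rw [hV, Set.mem_singleton_iff]; exact Subtype.ext h)
          rcases b.2 with h | h
          · exact absurd h hbx
          · exact h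
        · have hle : (F ⊓ 𝓟 Vᶜ).map (Subtype.val : A → X) ≤ F.map Subtype.val :=
            Filter.map_mono inf_le_left
          have := ξ.mono hle Filter.map_neBot
          apply this
          rw [← hax]
          exact haconv
      have hVind : @_root_.IsOpen A (TopologicalSpace.induced (Subtype.val : A → X) ξ.topMod) V := by
        rw [← hT A]
        exact hVopen
      obtain ⟨U, hU, hUV⟩ := isOpen_induced_iff.mp hVind
      have hxU : x ∈ U := by
        have : (⟨x, hxA⟩ : A) ∈ V := rfl
        rw [← hUV] at this
        exact this
      obtain ⟨y, hyU, hyS⟩ := mem_closure_iff.mp hx U hU hxU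
      have hyA : y ∈ A := Set.mem_insert_of_mem x hyS
      have hmem : (⟨y, hyA⟩ : A) ∈ Subtype.val ⁻¹' U := hyU
      rw [hUV] at hmem
      have heq : (⟨y, hyA⟩ : A) = ⟨x, hxA⟩ := hmem
      have : y = x := congrArg Subtype.val heq
      exact hxS (this ▸ hyS)
end

section
/- Let (X, ξ) be a finite convergence space. A subset A ⊆ X is a T-subspace if and only if for every a, b ∈ A, whenever there is a directed path from a to b in the digraph of ξ (edges x → y iff y ∈ lim_ξ {x}↑), there is also such a directed path from a to b all of whose vertices lie in A. -/
open Filter Set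

open Convergence in
private lemma conv_isOpen_iff {X : Type*} [Finite X] (ξ : Convergence X) (U : Set X) :
    ξ.IsOpen U ↔ ∀ x y, y ∈ ξ.conv (pure x) → y ∈ U → x ∈ U := by
  constructor
  · intro hU x y hy hyU
    exact hU (pure x) inferInstance ⟨y, hy, hyU⟩
  · intro h F hF hne
    obtain ⟨y, hyc, hyU⟩ := hne
    have hS : ⋂₀ F.sets ∈ F := (Filter.sInter_mem (Set.toFinite _)).mpr fun t ht => ht
    refine Filter.mem_of_superset hS fun x hx => ?_
    have hle : pure x ≤ F := fun s hs => hx s hs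
    exact h x y (ξ.mono hle inferInstance hyc) hyU

open Convergence in
private lemma isOpen_mem_of_path {X : Type*} [Finite X] {ξ : Convergence X} {U : Set X}
    (hU : ξ.IsOpen U) {a b : X}
    (h : Relation.ReflTransGen (fun x y => y ∈ ξ.conv (pure x)) a b) (hb : b ∈ U) : a ∈ U := by
  induction h with
  | refl => exact hb
  | tail _ h₂ ih => exact ih ((conv_isOpen_iff ξ U).mp hU _ _ h₂ hb)

open Convergence in
private lemma mem_subConv_pure {X : Type*} (ξ : Convergence X) (A : Set X) (x y : A) :
    y ∈ (ξ.subConv A).conv (pure x) ↔ (y : X) ∈ ξ.conv (pure (x : X)) := by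
  simp [Convergence.subConv]

open Convergence in
private lemma mem_of_pathA {X : Type*} [Finite X] {ξ : Convergence X} {A : Set X} {U : Set A}
    (hU : (ξ.subConv A).IsOpen U) {x w : X}
    (h : Relation.ReflTransGen (fun x y => x ∈ A ∧ y ∈ A ∧ y ∈ ξ.conv (pure x)) x w) :
    ∀ (hx : x ∈ A) (hw : w ∈ A), (⟨w, hw⟩ : A) ∈ U → (⟨x, hx⟩ : A) ∈ U := by
  induction h with
  | refl => intro hx hw hwU; exact hwU
  | tail _ h₂ ih =>
    intro hx hw hwU
    exact ih hx h₂.1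
      ((conv_isOpen_iff _ U).mp hU ⟨_, h₂.1⟩ ⟨_, hw⟩ ((mem_subConv_pure ξ A _ _).mpr h₂.2.2) hwU)

open Convergence in
/-- In a finite convergence space, `A` is a `T`-subspace iff whenever there is a
directed path from `a` to `b` (with `a, b ∈ A`), there is one lying in `A`. -/
theorem finite_tSubspace_iff {X : Type*} [Finite X] (ξ : Convergence X) (A : Set X) :
    ξ.TSubspace A ↔
      ∀ a ∈ A, ∀ b ∈ A,
        Relation.ReflTransGen (fun x y => y ∈ ξ.conv (pure x)) a b →
          Relation.ReflTransGen
            (fun x y => x ∈ A ∧ y ∈ A ∧ y ∈ ξ.conv (pure x)) a b := by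
  constructor
  · intro hT a ha b hb hpath
    set U : Set A :=
      {z | Relation.ReflTransGen (fun x y => x ∈ A ∧ y ∈ A ∧ y ∈ ξ.conv (pure x)) z.1 b} with hUdef
    have hUopen : (ξ.subConv A).IsOpen U := by
      rw [conv_isOpen_iff]
      intro x y hy hyU
      exact Relation.ReflTransGen.head ⟨x.2, y.2, (mem_subConv_pure ξ A x y).mp hy⟩ hyU
    have h2 : (TopologicalSpace.induced (Subtype.val : A → X) ξ.topMod).IsOpen U := by
      rw [← hT]; exact hUopen
    obtain ⟨V, hV, hVU⟩ := h2
    have hbU : (⟨b, hb⟩ : A) ∈ U := Relation.ReflTransGen.refl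
    have hbV : b ∈ V := by rw [← hVU] at hbU; exact hbU
    have haV : a ∈ V := isOpen_mem_of_path hV hpath hbV
    have : (⟨a, ha⟩ : A) ∈ U := by rw [← hVU]; exact haV
    exact this
  · intro h
    refine TopologicalSpace.ext ?_
    funext U
    apply propext
    constructor
    · intro hU
      refine ⟨{x : X | ∃ b : A, b ∈ U ∧
          Relation.ReflTransGen (fun x y => y ∈ ξ.conv (pure x)) x b.1}, ?_, ?_⟩
      · show ξ.IsOpen _
        rw [conv_isOpen_iff]
        rintro x y hy ⟨b, hbU, hpath⟩
        exact ⟨b, hbU, Relation.ReflTransGen.head hy hpath⟩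
      · ext z
        simp only [mem_preimage, mem_setOf_eq]
        constructor
        · rintro ⟨b, hbU, hpath⟩
          have hA := h z.1 z.2 b.1 b.2 hpath
          have := mem_of_pathA hU hA z.2 b.2
          simpa using this (by simpa using hbU)
        · intro hz
          exact ⟨z, hz, Relation.ReflTransGen.refl⟩
    · rintro ⟨V, hV, rfl⟩
      show (ξ.subConv A).IsOpen _
      rw [conv_isOpen_iff]
      intro x y hy hyV
      exact (conv_isOpen_iff ξ V).mp hV x.1 y.1 ((mem_subConv_pure ξ A x y).mp hy) hyV
end
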